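/- In the fixed-stress error framework (bilinear-form version), assume additionally that there is β_{sd} > 0 such that for every s ∈ Q there exists w ∈ U with D w = s and a(w, w) ≤ β_{sd}⁻² ‖s‖², and that L ≥ 1/(λ + c_{K_d}²). Then for every m ≥ 0: (L⁻¹/(β_{sd}⁻² + λ) + 1) ‖Σᵢ e_{p,i}^{m+1}‖² ≤ ‖Σᵢ e_{p,i}^m‖². In particular ‖Σᵢ e_{p,i}^{m+1}‖² ≤ rate_d² ‖Σᵢ e_{p,i}^m‖² with rate_d² = 1/(L⁻¹/(β_{sd}⁻² + λ) + 1) < 1. -/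

import Mathlib

open scoped RealInnerProductSpace

/-!
Write `Pᵐ = Σᵢ e_{p,i}ᵐ`, `tᵐ = D e_uᵐ` and `Kᵐ = ⟪Pᵐ, tᵐ⟫ = a(e_uᵐ, e_uᵐ) + λ‖tᵐ‖²`.
Testing the flow equations with `qᵢ = e_{p,i}ᵐ⁺¹` and `zᵢ = e_{v,i}ᵐ⁺¹` and dropping the
nonnegative flux and coupling terms gives `L ‖Pᵐ⁺¹‖² ≤ ⟪L Pᵐ - tᵐ, Pᵐ⁺¹⟫`, hence
`L ‖Pᵐ⁺¹‖ ≤ ‖L Pᵐ - tᵐ‖`. Expanding the square and using `‖tᵐ‖² ≤ L Kᵐ` (Korn and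
`L (λ + c_{K_d}²) ≥ 1`) yields `L² ‖Pᵐ⁺¹‖² ≤ L² ‖Pᵐ‖² - L Kᵐ`.
The inf-sup condition together with Cauchy–Schwarz for `a + λ ⟪D ·, D ·⟫` bounds `Kᵐ` from below
by `‖Pᵐ‖² / (β_{sd}⁻² + λ)`, which gives `‖Pᵐ⁺¹‖² ≤ (1 - ε) ‖Pᵐ‖²` with
`ε = L⁻¹ / (β_{sd}⁻² + λ)`, and `(1 + ε)(1 - ε) ≤ 1`.
-/

theorem Matrix.PosSemidef.sum_mul_inner_nonneg {ι E : Type*} [Fintype ι]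
    [SeminormedAddCommGroup E] [InnerProductSpace ℝ E] {M : Matrix ι ι ℝ} (hM : M.PosSemidef)
    (p : ι → E) : 0 ≤ ∑ i, ∑ j, M i j * ⟪p j, p i⟫ := by
  -- Schur product theorem: the sum is `𝟙ᵀ (M ⊙ gram p) 𝟙`.
  have h := (hM.hadamard (Matrix.posSemidef_gram ℝ p)).dotProduct_mulVec_nonneg fun _ => 1
  simpa [dotProduct, Matrix.mulVec, real_inner_comm] using h

theorem mul_norm_le_norm_of_mul_norm_sq_le_inner {E : Type*} [SeminormedAddCommGroup E]
    [InnerProductSpace ℝ E] {c : ℝ} {x z : E} (h : c * ‖x‖ ^ 2 ≤ ⟪z, x⟫) : c * ‖x‖ ≤ ‖z‖ := by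
  rcases (norm_nonneg x).eq_or_lt with hx | hx
  · rw [← hx, mul_zero]
    exact norm_nonneg z
  · refine le_of_mul_le_mul_right ?_ hx
    calc c * ‖x‖ * ‖x‖ = c * ‖x‖ ^ 2 := by ring
      _ ≤ ⟪z, x⟫ := h
      _ ≤ ‖z‖ * ‖x‖ := real_inner_le_norm z x

theorem le_one_sub_div_mul_of_sq_mul_le {X Y K L c : ℝ} (hL : 0 < L) (hc : 0 < c)
    (h : L ^ 2 * X ≤ L ^ 2 * Y - L * K) (hY : Y ≤ c * K) : X ≤ (1 - L⁻¹ / c) * Y := by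
  have hX : X ≤ Y - K / L := by
    rw [← mul_le_mul_iff_right₀ (by positivity : 0 < L ^ 2)]
    calc L ^ 2 * X ≤ L ^ 2 * Y - L * K := h
      _ = L ^ 2 * (Y - K / L) := by field_simp
  have hK : Y / c / L ≤ K / L := by
    gcongr
    rwa [div_le_iff₀' hc]
  calc X ≤ Y - K / L := hX
    _ ≤ Y - Y / c / L := by linarith
    _ = (1 - L⁻¹ / c) * Y := by field_simp

section Displacement

theorem inner_nonneg_of_displacement_eq {U Q : Type*} [SeminormedAddCommGroup Q]
    [InnerProductSpace ℝ Q] {a : U → U → ℝ} {D : U → Q} {lam : ℝ} {u : U} {s : Q}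
    (hapsd : ∀ u, 0 ≤ a u u) (hlam : 0 ≤ lam) (hu : ∀ w, a u w + lam * ⟪D u, D w⟫ = ⟪s, D w⟫) :
    0 ≤ ⟪s, D u⟫ := by
  rw [← hu u]
  exact add_nonneg (hapsd u) (mul_nonneg hlam real_inner_self_nonneg)

theorem norm_sq_le_mul_inner_of_korn {U Q : Type*} [SeminormedAddCommGroup Q]
    [InnerProductSpace ℝ Q] {a : U → U → ℝ} {D : U → Q} {lam c L : ℝ} {u : U} {s : Q}
    (hlam : 0 < lam) (hKorn : c ^ 2 * ‖D u‖ ^ 2 ≤ a u u) (hL : 1 / (lam + c ^ 2) ≤ L)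
    (hu : ∀ w, a u w + lam * ⟪D u, D w⟫ = ⟪s, D w⟫) : ‖D u‖ ^ 2 ≤ L * ⟪s, D u⟫ := by
  have hpos : 0 < lam + c ^ 2 := by positivity
  have hL1 : 1 ≤ L * (lam + c ^ 2) := (div_le_iff₀ hpos).mp hL
  have hL0 : 0 ≤ L := le_trans (by positivity) hL
  have henergy : (lam + c ^ 2) * ‖D u‖ ^ 2 ≤ ⟪s, D u⟫ := by
    rw [← hu u, real_inner_self_eq_norm_sq]
    linarith
  calc ‖D u‖ ^ 2 ≤ L * (lam + c ^ 2) * ‖D u‖ ^ 2 := le_mul_of_one_le_left (by positivity) hL1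
    _ = L * ((lam + c ^ 2) * ‖D u‖ ^ 2) := by ring
    _ ≤ L * ⟪s, D u⟫ := mul_le_mul_of_nonneg_left henergy hL0

variable {U Q F : Type*} [AddCommGroup U] [Module ℝ U] [SeminormedAddCommGroup Q]
  [InnerProductSpace ℝ Q] [FunLike F U Q] [LinearMapClass F ℝ U Q]

theorem sq_add_mul_inner_le {a : U →ₗ[ℝ] U →ₗ[ℝ] ℝ} (hasymm : ∀ u w, a u w = a w u)
    (hapsd : ∀ u, 0 ≤ a u u) (D : F) {lam : ℝ} (hlam : 0 ≤ lam) (u w : U) :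
    (a u w + lam * ⟪D u, D w⟫) ^ 2 ≤ (a u u + lam * ‖D u‖ ^ 2) * (a w w + lam * ‖D w‖ ^ 2) := by
  let B : LinearMap.BilinForm ℝ U :=
    a + lam • (innerₗ Q).compl₁₂ (D : U →ₗ[ℝ] Q) (D : U →ₗ[ℝ] Q)
  have hB : ∀ x y, B x y = a x y + lam * ⟪D x, D y⟫ := fun _ _ => rfl
  have hCS := B.apply_sq_le_of_symm
    (fun x => add_nonneg (hapsd x) (mul_nonneg hlam real_inner_self_nonneg))
    ⟨fun x y => by simp only [hB, RingHom.id_apply, hasymm x y, real_inner_comm]⟩ u w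
  simpa only [hB, real_inner_self_eq_norm_sq] using hCS

theorem norm_sq_le_mul_inner_of_infsup {a : U →ₗ[ℝ] U →ₗ[ℝ] ℝ}
    (hasymm : ∀ u w, a u w = a w u) (hapsd : ∀ u, 0 ≤ a u u) {D : F} {lam β : ℝ}
    (hlam : 0 ≤ lam) {u : U} {s : Q} (hu : ∀ w, a u w + lam * ⟪D u, D w⟫ = ⟪s, D w⟫)
    (hinfsup : ∃ w, D w = s ∧ a w w ≤ (β ^ 2)⁻¹ * ‖s‖ ^ 2) :
    ‖s‖ ^ 2 ≤ ((β ^ 2)⁻¹ + lam) * ⟪s, D u⟫ := by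
  obtain ⟨w, hDw, hw⟩ := hinfsup
  have henergy : a u u + lam * ‖D u‖ ^ 2 = ⟪s, D u⟫ := by
    rw [← real_inner_self_eq_norm_sq]
    exact hu u
  have hK : 0 ≤ ⟪s, D u⟫ := inner_nonneg_of_displacement_eq hapsd hlam hu
  have hCS := sq_add_mul_inner_le hasymm hapsd D hlam u w
  rw [hu w, henergy, hDw, real_inner_self_eq_norm_sq] at hCS
  have hsq : (‖s‖ ^ 2) ^ 2 ≤ ((β ^ 2)⁻¹ + lam) * ⟪s, D u⟫ * ‖s‖ ^ 2 :=
    calc (‖s‖ ^ 2) ^ 2 ≤ ⟪s, D u⟫ * (a w w + lam * ‖s‖ ^ 2) := hCS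
      _ ≤ ⟪s, D u⟫ * (((β ^ 2)⁻¹ + lam) * ‖s‖ ^ 2) := by gcongr; linarith
      _ = ((β ^ 2)⁻¹ + lam) * ⟪s, D u⟫ * ‖s‖ ^ 2 := by ring
  have hc : 0 ≤ ((β ^ 2)⁻¹ + lam) * ⟪s, D u⟫ := by positivity
  nlinarith [sq_nonneg (‖s‖ ^ 2)]

end Displacement

section FixedStressStep

variable {ι Q : Type*} [Fintype ι] {V : ι → Type*} [SeminormedAddCommGroup Q]
  [InnerProductSpace ℝ Q] [∀ i, SeminormedAddCommGroup (V i)] [∀ i, InnerProductSpace ℝ (V i)]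

theorem mul_norm_sq_sum_le_inner_of_flow_eq {Dv : ∀ i, V i → Q} {M : Matrix ι ι ℝ}
    (hM : M.PosSemidef) {Rinv : ι → ℝ} (hRinv : ∀ i, 0 ≤ Rinv i) {L : ℝ} {v : ∀ i, V i}
    {p p' : ι → Q} {t : Q}
    (h1 : ∀ q : ι → Q, -(∑ i, ⟪Dv i (v i), q i⟫) - ∑ i, ∑ j, M i j * ⟪p' j, q i⟫
        - L * ⟪∑ j, p' j, ∑ i, q i⟫ = -(L * ⟪∑ j, p j, ∑ i, q i⟫) + ⟪t, ∑ i, q i⟫)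
    (h2 : ∀ z : ∀ i, V i, ∑ i, Rinv i * ⟪v i, z i⟫ - ∑ i, ⟪p' i, Dv i (z i)⟫ = 0) :
    L * ‖∑ i, p' i‖ ^ 2 ≤ ⟪L • ∑ i, p i - t, ∑ i, p' i⟫ := by
  have hflux : 0 ≤ ∑ i, ⟪Dv i (v i), p' i⟫ := by
    rw [Finset.sum_congr rfl fun i _ => real_inner_comm (p' i) (Dv i (v i)),
      ← sub_eq_zero.mp (h2 v)]
    exact Finset.sum_nonneg fun i _ => mul_nonneg (hRinv i) real_inner_self_nonneg
  have hcoupling := hM.sum_mul_inner_nonneg p'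
  have h := h1 p'
  rw [real_inner_self_eq_norm_sq] at h
  rw [inner_sub_left, real_inner_smul_left]
  linarith

variable {U F : Type*} [AddCommGroup U] [Module ℝ U] [FunLike F U Q] [LinearMapClass F ℝ U Q]

theorem norm_sq_sum_le_one_sub_mul_of_fixedStress_step {a : U →ₗ[ℝ] U →ₗ[ℝ] ℝ}
    (hasymm : ∀ u w, a u w = a w u) (hapsd : ∀ u, 0 ≤ a u u) {D : F} {Dv : ∀ i, V i → Q}
    {lam L cKd β : ℝ} (hlam : 0 < lam) (hL : 0 < L) {Rinv : ι → ℝ} (hRinv : ∀ i, 0 ≤ Rinv i)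
    {M : Matrix ι ι ℝ} (hM : M.PosSemidef) {u : U} {v : ∀ i, V i} {p p' : ι → Q}
    (hKorn : cKd ^ 2 * ‖D u‖ ^ 2 ≤ a u u) (hLge : 1 / (lam + cKd ^ 2) ≤ L)
    (hinfsup : ∃ w, D w = ∑ i, p i ∧ a w w ≤ (β ^ 2)⁻¹ * ‖∑ i, p i‖ ^ 2)
    (h1 : ∀ q : ι → Q, -(∑ i, ⟪Dv i (v i), q i⟫) - ∑ i, ∑ j, M i j * ⟪p' j, q i⟫
        - L * ⟪∑ j, p' j, ∑ i, q i⟫ = -(L * ⟪∑ j, p j, ∑ i, q i⟫) + ⟪D u, ∑ i, q i⟫)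
    (h2 : ∀ z : ∀ i, V i, ∑ i, Rinv i * ⟪v i, z i⟫ - ∑ i, ⟪p' i, Dv i (z i)⟫ = 0)
    (hu : ∀ w, a u w + lam * ⟪D u, D w⟫ = ⟪∑ i, p i, D w⟫) :
    ‖∑ i, p' i‖ ^ 2 ≤ (1 - L⁻¹ / ((β ^ 2)⁻¹ + lam)) * ‖∑ i, p i‖ ^ 2 := by
  have htK := norm_sq_le_mul_inner_of_korn (a := fun x y => a x y) (D := D) hlam hKorn hLge hu
  have hPK := norm_sq_le_mul_inner_of_infsup hasymm hapsd hlam.le hu hinfsup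
  have hstep := mul_norm_le_norm_of_mul_norm_sq_le_inner
    (mul_norm_sq_sum_le_inner_of_flow_eq hM hRinv h1 h2)
  have hdecay : L ^ 2 * ‖∑ i, p' i‖ ^ 2
      ≤ L ^ 2 * ‖∑ i, p i‖ ^ 2 - L * ⟪∑ i, p i, D u⟫ :=
    calc L ^ 2 * ‖∑ i, p' i‖ ^ 2 = (L * ‖∑ i, p' i‖) ^ 2 := by ring
      _ ≤ ‖L • ∑ i, p i - D u‖ ^ 2 := pow_le_pow_left₀ (by positivity) hstep 2
      _ = L ^ 2 * ‖∑ i, p i‖ ^ 2 - 2 * L * ⟪∑ i, p i, D u⟫ + ‖D u‖ ^ 2 := by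
        rw [norm_sub_sq_real, norm_smul, real_inner_smul_left, Real.norm_of_nonneg hL.le]
        ring
      _ ≤ L ^ 2 * ‖∑ i, p i‖ ^ 2 - L * ⟪∑ i, p i, D u⟫ := by linarith
  exact le_one_sub_div_mul_of_sq_mul_le hL (by positivity) hdecay hPK

end FixedStressStep

theorem fixed_stress_contraction_discrete_general
    {U Q : Type*}
    [NormedAddCommGroup U] [InnerProductSpace ℝ U]
    [NormedAddCommGroup Q] [InnerProductSpace ℝ Q]
    (n : ℕ)
    (V : Fin n → Type*)
    [∀ i, NormedAddCommGroup (V i)] [∀ i, InnerProductSpace ℝ (V i)]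
    (a : U →ₗ[ℝ] U →ₗ[ℝ] ℝ)
    (hasymm : ∀ u w : U, a u w = a w u) (hapsd : ∀ u : U, 0 ≤ a u u)
    (D : U →L[ℝ] Q) (Dv : ∀ i, V i →L[ℝ] Q)
    (lam L cKd : ℝ) (Rinv : Fin n → ℝ)
    (hlam : 0 < lam) (hL : 0 < L) (hRinv : ∀ i, 0 < Rinv i)
    (M : Matrix (Fin n) (Fin n) ℝ) (hM : M.PosSemidef)
    (hKorn : ∀ w : U, cKd ^ 2 * ‖D w‖ ^ 2 ≤ a w w)
    (eu : ℕ → U) (ev : ℕ → ∀ i, V i) (ep : ℕ → Fin n → Q)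
    (heq1 : ∀ (m : ℕ) (q : Fin n → Q),
      -(∑ i, ⟪Dv i (ev (m + 1) i), q i⟫)
          - ∑ i, ∑ j, M i j * ⟪ep (m + 1) j, q i⟫
          - L * ⟪∑ j, ep (m + 1) j, ∑ i, q i⟫
        = -(L * ⟪∑ j, ep m j, ∑ i, q i⟫) + ⟪D (eu m), ∑ i, q i⟫)
    (heq2 : ∀ (m : ℕ) (z : ∀ i, V i),
      ∑ i, Rinv i * ⟪ev (m + 1) i, z i⟫ - ∑ i, ⟪ep (m + 1) i, Dv i (z i)⟫ = 0)
    (heq3 : ∀ (m : ℕ) (w : U),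
      a (eu m) w + lam * ⟪D (eu m), D w⟫ = ⟪∑ i, ep m i, D w⟫)
    (hLge : 1 / (lam + cKd ^ 2) ≤ L)
    (βsd : ℝ)
    (hinfsup : ∀ s : Q, ∃ w : U, D w = s ∧ a w w ≤ (βsd ^ 2)⁻¹ * ‖s‖ ^ 2) :
    (∀ m : ℕ,
      (L⁻¹ / ((βsd ^ 2)⁻¹ + lam) + 1) * ‖∑ i, ep (m + 1) i‖ ^ 2 ≤ ‖∑ i, ep m i‖ ^ 2) ∧
    (∀ m : ℕ,
      ‖∑ i, ep (m + 1) i‖ ^ 2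
        ≤ (1 / (L⁻¹ / ((βsd ^ 2)⁻¹ + lam) + 1)) * ‖∑ i, ep m i‖ ^ 2) ∧
    1 / (L⁻¹ / ((βsd ^ 2)⁻¹ + lam) + 1) < 1 := by
  have hε : 0 < L⁻¹ / ((βsd ^ 2)⁻¹ + lam) := by positivity
  have hcontract (m : ℕ) : ‖∑ i, ep (m + 1) i‖ ^ 2
      ≤ (1 - L⁻¹ / ((βsd ^ 2)⁻¹ + lam)) * ‖∑ i, ep m i‖ ^ 2 :=
    norm_sq_sum_le_one_sub_mul_of_fixedStress_step hasymm hapsd hlam hL (fun i => (hRinv i).le)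
      hM (hKorn (eu m)) hLge (hinfsup _) (heq1 m) (heq2 m) (heq3 m)
  have hrate (m : ℕ) :
      (L⁻¹ / ((βsd ^ 2)⁻¹ + lam) + 1) * ‖∑ i, ep (m + 1) i‖ ^ 2 ≤ ‖∑ i, ep m i‖ ^ 2 := by
    nlinarith [mul_le_mul_of_nonneg_left (hcontract m) (add_pos hε one_pos).le,
      mul_nonneg (sq_nonneg (L⁻¹ / ((βsd ^ 2)⁻¹ + lam))) (sq_nonneg ‖∑ i, ep m i‖)]
  refine ⟨hrate, fun m => ?_, ?_⟩
  · rw [one_div_mul_eq_div, le_div_iff₀ (by positivity), mul_comm]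
    exact hrate m
  · rw [div_lt_one (by positivity)]
    linarith

/-- Theorem 4 ((error_sum_p:dis)–(rate_gen:dis)) of the paper: under the abstract
discrete Stokes inf-sup condition with constant β_{sd} and L ≥ 1/(λ + c_{K_d}²), the
discrete fixed-stress iteration contracts:
(L⁻¹/(β_{sd}⁻² + λ) + 1)‖Σᵢ e_{p,i}^{m+1}‖² ≤ ‖Σᵢ e_{p,i}^m‖², and in particular
‖Σᵢ e_{p,i}^{m+1}‖² ≤ rate_d²‖Σᵢ e_{p,i}^m‖² with
rate_d² = 1/(L⁻¹/(β_{sd}⁻² + λ) + 1) < 1. -/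
theorem fixed_stress_contraction_discrete
    {U Q : Type*}
    [NormedAddCommGroup U] [InnerProductSpace ℝ U] [CompleteSpace U]
    [NormedAddCommGroup Q] [InnerProductSpace ℝ Q] [CompleteSpace Q]
    (n : ℕ) (hn : 1 ≤ n)
    (V : Fin n → Type*)
    [∀ i, NormedAddCommGroup (V i)] [∀ i, InnerProductSpace ℝ (V i)]
    [∀ i, CompleteSpace (V i)]
    (a : U →ₗ[ℝ] U →ₗ[ℝ] ℝ)
    (hasymm : ∀ u w : U, a u w = a w u) (hapsd : ∀ u : U, 0 ≤ a u u)
    (D : U →L[ℝ] Q) (Dv : ∀ i, V i →L[ℝ] Q)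
    (lam L cKd : ℝ) (Rinv : Fin n → ℝ)
    (hlam : 0 < lam) (hL : 0 < L) (hRinv : ∀ i, 0 < Rinv i) (hcKd : 0 < cKd)
    (M : Matrix (Fin n) (Fin n) ℝ) (hM : M.PosSemidef)
    (hKorn : ∀ w : U, cKd ^ 2 * ‖D w‖ ^ 2 ≤ a w w)
    (eu : ℕ → U) (ev : ℕ → ∀ i, V i) (ep : ℕ → Fin n → Q)
    (heq1 : ∀ (m : ℕ) (q : Fin n → Q),
      -(∑ i, ⟪Dv i (ev (m + 1) i), q i⟫)
          - ∑ i, ∑ j, M i j * ⟪ep (m + 1) j, q i⟫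
          - L * ⟪∑ j, ep (m + 1) j, ∑ i, q i⟫
        = -(L * ⟪∑ j, ep m j, ∑ i, q i⟫) + ⟪D (eu m), ∑ i, q i⟫)
    (heq2 : ∀ (m : ℕ) (z : ∀ i, V i),
      ∑ i, Rinv i * ⟪ev (m + 1) i, z i⟫ - ∑ i, ⟪ep (m + 1) i, Dv i (z i)⟫ = 0)
    (heq3 : ∀ (m : ℕ) (w : U),
      a (eu m) w + lam * ⟪D (eu m), D w⟫ = ⟪∑ i, ep m i, D w⟫)
    (hLge : 1 / (lam + cKd ^ 2) ≤ L)
    (βsd : ℝ) (hβsd : 0 < βsd)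
    (hinfsup : ∀ s : Q, ∃ w : U, D w = s ∧ a w w ≤ (βsd ^ 2)⁻¹ * ‖s‖ ^ 2) :
    (∀ m : ℕ,
      (L⁻¹ / ((βsd ^ 2)⁻¹ + lam) + 1) * ‖∑ i, ep (m + 1) i‖ ^ 2 ≤ ‖∑ i, ep m i‖ ^ 2) ∧
    (∀ m : ℕ,
      ‖∑ i, ep (m + 1) i‖ ^ 2
        ≤ (1 / (L⁻¹ / ((βsd ^ 2)⁻¹ + lam) + 1)) * ‖∑ i, ep m i‖ ^ 2) ∧
    1 / (L⁻¹ / ((βsd ^ 2)⁻¹ + lam) + 1) < 1 :=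
  fixed_stress_contraction_discrete_general n V a hasymm hapsd D Dv lam L cKd Rinv hlam hL hRinv M
    hM hKorn eu ev ep heq1 heq2 heq3 hLge βsd hinfsup
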